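/- Suppose Σ_{j∈Λ*_p} r_j + Σ_{j,k∈Λ*_p} a_{j,k} > 0. Let ρ: Λ*_p → ℝ be the unique solution of the system (*), and for each N ≥ 2 let μ_N be the unique stationary state of L_N with ρ_N(k) = E_{μ_N}[η_k]. Then there exists a finite constant C₀, independent of N, such that |ρ_N(k) − ρ(k)| ≤ C₀/N for all −p ≤ k ≤ 0 and all N. -/

import Mathlib

open Finset Filter Topology

/-- Occupation value of a site. -/
def occ (b : Bool) : ℝ := if b then 1 else 0

/-- Flip the occupation variable at site `i`. -/
def flipCfg {m : ℕ} (η : Fin m → Bool) (i : Fin m) : Fin m → Bool :=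
  Function.update η i (!(η i))

/-- Exchange the occupation variables at sites `i` and `j`. -/
def swapCfg {m : ℕ} (η : Fin m → Bool) (i j : Fin m) : Fin m → Bool :=
  fun k => η (Equiv.swap i j k)

/-- A stationary state of a generator `L` on a finite set `S`. -/
def IsStationaryGen {S : Type*} [Fintype S] (L : (S → ℝ) → S → ℝ) (μ : S → ℝ) : Prop :=
  (∀ x, 0 ≤ μ x) ∧ (∑ x, μ x = 1) ∧ ∀ f : S → ℝ, ∑ x, μ x * L f x = 0

/-- Expectation of `g` under the (finitely supported) measure `μ`. -/
def expVal {S : Type*} [Fintype S] (μ : S → ℝ) (g : S → ℝ) : ℝ := ∑ x, μ x * g x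

/- The sites of `Λ_{N,p} = {-p, …, N-1}` are indexed by `Fin (N+p)`, the index
`i` corresponding to the site `i - p`; the sites of `Λ*_p = {-p, …, 0}` are
indexed by `Fin (p+1)` in the same way. -/

/-- Embedding of `Λ*_p` into `Λ_{N,p}`. -/
def emb (N p : ℕ) (hN : 1 ≤ N) (j : Fin (p+1)) : Fin (N+p) :=
  ⟨j.1, by have := j.isLt; omega⟩

/-- Stirring on the sites `-p, …, -1` of the left boundary. -/
def LS (N p : ℕ) (hN : 1 ≤ N) (f : (Fin (N+p) → Bool) → ℝ) (η : Fin (N+p) → Bool) : ℝ :=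
  ∑ i : Fin p,
    (f (swapCfg η ⟨i.1, by have := i.isLt; omega⟩ ⟨i.1 + 1, by have := i.isLt; omega⟩) - f η)

/-- Reservoir dynamics on the left boundary. -/
def LR (N p : ℕ) (hN : 1 ≤ N) (r α : Fin (p+1) → ℝ)
    (f : (Fin (N+p) → Bool) → ℝ) (η : Fin (N+p) → Bool) : ℝ :=
  ∑ j : Fin (p+1),
    r j * (α j * (1 - occ (η (emb N p hN j))) + occ (η (emb N p hN j)) * (1 - α j)) *
      (f (flipCfg η (emb N p hN j)) - f η)

/-- Copying dynamics on the left boundary. -/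
def LC (N p : ℕ) (hN : 1 ≤ N) (cR : Fin (p+1) → Fin (p+1) → ℝ)
    (f : (Fin (N+p) → Bool) → ℝ) (η : Fin (N+p) → Bool) : ℝ :=
  ∑ j : Fin (p+1), ∑ k : Fin (p+1),
    cR j k * (occ (η (emb N p hN k)) * (1 - occ (η (emb N p hN j)))
        + occ (η (emb N p hN j)) * (1 - occ (η (emb N p hN k)))) *
      (f (flipCfg η (emb N p hN j)) - f η)

/-- Anti-copying dynamics on the left boundary. -/
def LA (N p : ℕ) (hN : 1 ≤ N) (aR : Fin (p+1) → Fin (p+1) → ℝ)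
    (f : (Fin (N+p) → Bool) → ℝ) (η : Fin (N+p) → Bool) : ℝ :=
  ∑ j : Fin (p+1), ∑ k : Fin (p+1),
    aR j k * (occ (η (emb N p hN j)) * occ (η (emb N p hN k))
        + (1 - occ (η (emb N p hN j))) * (1 - occ (η (emb N p hN k)))) *
      (f (flipCfg η (emb N p hN j)) - f η)

/-- Stirring between the sites `0` and `1`. -/
def L01 (N p : ℕ) (hN : 2 ≤ N) (f : (Fin (N+p) → Bool) → ℝ) (η : Fin (N+p) → Bool) : ℝ :=
  f (swapCfg η ⟨p, by omega⟩ ⟨p + 1, by omega⟩) - f η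

/-- Symmetric exclusion on the sites `1, …, N-1` (exchanges at `(k, k+1)`,
`1 ≤ k ≤ N-2`). -/
def Lbulk (N p : ℕ) (f : (Fin (N+p) → Bool) → ℝ) (η : Fin (N+p) → Bool) : ℝ :=
  ∑ k : Fin (N-2),
    (f (swapCfg η ⟨k.1 + p + 1, by have := k.isLt; omega⟩
          ⟨k.1 + p + 2, by have := k.isLt; omega⟩) - f η)

/-- Right reservoir at density `β`, acting on the site `N-1`. -/
def Lright (N p : ℕ) (hN : 1 ≤ N) (β : ℝ)
    (f : (Fin (N+p) → Bool) → ℝ) (η : Fin (N+p) → Bool) : ℝ :=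
  (β * (1 - occ (η ⟨N + p - 1, by omega⟩)) + (1 - β) * occ (η ⟨N + p - 1, by omega⟩)) *
    (f (flipCfg η ⟨N + p - 1, by omega⟩) - f η)

/-- The full generator `L_N = L_l + L_{0,1} + L_{b,N} + L_{r,N}` with
`L_l = L_S + L_R + L_C + L_A`. -/
def LN (N p : ℕ) (hN : 2 ≤ N) (r α : Fin (p+1) → ℝ)
    (cR aR : Fin (p+1) → Fin (p+1) → ℝ) (β : ℝ)
    (f : (Fin (N+p) → Bool) → ℝ) (η : Fin (N+p) → Bool) : ℝ :=
  LS N p (by omega) f η + LR N p (by omega) r α f η + LC N p (by omega) cR f η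
    + LA N p (by omega) aR f η + L01 N p hN f η + Lbulk N p f η
    + Lright N p (by omega) β f η

/- The sites of `Λ*_p = {-p, …, 0}` are indexed by `Fin (p+1)`, the index `i`
corresponding to the site `i - p`.  (For the discrete Laplacian `𝒯` to make
sense, `Λ*_p` must contain at least two sites, i.e. `1 ≤ p`.) -/

/-- `(𝒞ρ)(j) = Σ_k c_{j,k} [ρ(k) − ρ(j)]`. -/
def CSum (p : ℕ) (cR : Fin (p+1) → Fin (p+1) → ℝ) (ρ : Fin (p+1) → ℝ)
    (j : Fin (p+1)) : ℝ :=
  ∑ k : Fin (p+1), cR j k * (ρ k - ρ j)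

/-- `(𝒜ρ)(j) = Σ_k a_{j,k} [1 − ρ(k) − ρ(j)]`. -/
def ASum (p : ℕ) (aR : Fin (p+1) → Fin (p+1) → ℝ) (ρ : Fin (p+1) → ℝ)
    (j : Fin (p+1)) : ℝ :=
  ∑ k : Fin (p+1), aR j k * (1 - ρ k - ρ j)

/-- `(𝒯ρ)(j)`: Neumann discrete Laplacian on `Λ*_p` (index `0` is site `-p`,
index `p` is site `0`). -/
def TSum (p : ℕ) (hp : 1 ≤ p) (ρ : Fin (p+1) → ℝ) (j : Fin (p+1)) : ℝ :=
  if j.1 = 0 then ρ ⟨1, by omega⟩ - ρ ⟨0, by omega⟩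
  else if h : j.1 = p then ρ ⟨p - 1, by omega⟩ - ρ ⟨p, by omega⟩
  else ρ ⟨j.1 + 1, by have := j.isLt; omega⟩ + ρ ⟨j.1 - 1, by omega⟩ - 2 * ρ j

/-!
Taking expectations of `L_N η_k` under the stationary state gives closed linear equations for
`ρ_N`. In the bulk `ρ_N` is discrete harmonic, hence affine on `{0, …, N-1}`; as it takes values
in `[0, 1]`, its slope `s = ρ_N(1) - ρ_N(0)` is `O(1/N)`. On `Λ*_p`, `ρ_N` satisfies the system
(*) up to an extra term `s` at the site `0`, so `ρ_N - ρ` solves the linearised system with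
right-hand side `-s e₀`. By a maximum principle, which is where `Σ r_j + Σ a_{j,k} > 0` enters,
the linearised operator is injective, hence invertible, and `ρ_N - ρ = -s w` for the fixed
solution `w` of the linearised system with right-hand side `e₀`.
-/

section BoundarySystem

variable {p : ℕ} (hp : 1 ≤ p) (r α : Fin (p+1) → ℝ) (cR aR : Fin (p+1) → Fin (p+1) → ℝ)

def boundaryResidual (x : Fin (p+1) → ℝ) (j : Fin (p+1)) : ℝ :=
  r j * (α j - x j) + CSum p cR x j + ASum p aR x j + TSum p hp x j

def boundaryOp : (Fin (p+1) → ℝ) →ₗ[ℝ] (Fin (p+1) → ℝ) where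
  toFun x j := -(r j * x j) + CSum p cR x j - ∑ k, aR j k * (x k + x j) + TSum p hp x j
  map_add' x y := by
    funext j
    simp only [CSum, TSum, Pi.add_apply, mul_add, mul_sub, sum_add_distrib, sum_sub_distrib]
    split_ifs <;> ring
  map_smul' c x := by
    funext j
    simp only [CSum, TSum, Pi.smul_apply, smul_eq_mul, RingHom.id_apply, mul_add, mul_sub,
      sum_add_distrib, sum_sub_distrib, mul_sum, mul_left_comm _ c]
    split_ifs <;> ring

lemma boundaryOp_sub_apply (x y : Fin (p+1) → ℝ) (j : Fin (p+1)) :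
    boundaryOp hp r cR aR (x - y) j =
      boundaryResidual hp r α cR aR x j - boundaryResidual hp r α cR aR y j := by
  simp only [boundaryOp, boundaryResidual, LinearMap.coe_mk, AddHom.coe_mk, CSum, ASum, TSum,
    Pi.sub_apply, mul_add, mul_sub, sum_add_distrib, sum_sub_distrib]
  split_ifs <;> ring

lemma boundaryOp_const_apply (M : ℝ) (j : Fin (p+1)) :
    boundaryOp hp r cR aR (fun _ => M) j = -((r j + 2 * ∑ k, aR j k) * M) := by
  simp only [boundaryOp, LinearMap.coe_mk, AddHom.coe_mk, CSum, TSum, sub_self, mul_zero,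
    sum_const_zero, ← sum_mul]
  split_ifs <;> ring

end BoundarySystem

lemma Fin.iff_zero_of_forall_castSucc_iff_succ {n : ℕ} (P : Fin (n+1) → Prop)
    (h : ∀ i : Fin n, P i.castSucc ↔ P i.succ) (k : Fin (n+1)) : P k ↔ P 0 :=
  Fin.induction Iff.rfl (fun i hi => (h i).symm.trans hi) k

section MaximumPrinciple

variable {p : ℕ} (hp : 1 ≤ p) (x : Fin (p+1) → ℝ) {j : Fin (p+1)}

lemma TSum_nonpos_of_isMax (hmax : ∀ k, x k ≤ x j) : TSum p hp x j ≤ 0 := by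
  unfold TSum
  split_ifs with h0 hp'
  · have hj : x j = x ⟨0, by omega⟩ := congrArg x (Fin.ext h0)
    linarith [hmax ⟨1, by omega⟩]
  · have hj : x j = x ⟨p, by omega⟩ := congrArg x (Fin.ext hp')
    linarith [hmax ⟨p - 1, by omega⟩]
  · linarith [hmax ⟨j.1 + 1, by omega⟩, hmax ⟨j.1 - 1, by omega⟩]

lemma eq_of_TSum_eq_zero_of_isMax (hmax : ∀ k, x k ≤ x j) (hT : TSum p hp x j = 0)
    (k : Fin (p+1)) (hk : k.1 + 1 = j.1 ∨ j.1 + 1 = k.1) : x k = x j := by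
  unfold TSum at hT
  split_ifs at hT with h0 hp'
  · have hj : x j = x ⟨0, by omega⟩ := congrArg x (Fin.ext h0)
    have hk' : x k = x ⟨1, by omega⟩ := congrArg x (Fin.ext (by dsimp only; omega))
    linarith
  · have hj : x j = x ⟨p, by omega⟩ := congrArg x (Fin.ext hp')
    have hk' : x k = x ⟨p - 1, by omega⟩ := congrArg x (Fin.ext (by dsimp only; omega))
    linarith
  · have hsucc := hmax ⟨j.1 + 1, by omega⟩
    have hpred := hmax ⟨j.1 - 1, by omega⟩
    rcases hk with hk | hk
    · have hk' : x k = x ⟨j.1 - 1, by omega⟩ := congrArg x (Fin.ext (by dsimp only; omega))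
      linarith
    · have hk' : x k = x ⟨j.1 + 1, by omega⟩ := congrArg x (Fin.ext (by dsimp only; omega))
      linarith

end MaximumPrinciple

section Injectivity

variable {p : ℕ} (hp : 1 ≤ p) {r : Fin (p+1) → ℝ} {cR aR : Fin (p+1) → Fin (p+1) → ℝ}

lemma TSum_eq_zero_of_boundaryOp_eq_zero (hr : ∀ j, 0 ≤ r j) (hc : ∀ j k, 0 ≤ cR j k)
    (ha : ∀ j k, 0 ≤ aR j k) {x : Fin (p+1) → ℝ} (hx : boundaryOp hp r cR aR x = 0) (j : Fin (p+1))
    (hmax : ∀ k, |x k| ≤ x j) : TSum p hp x j = 0 := by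
  have h0 := congrFun hx j
  simp only [boundaryOp, LinearMap.coe_mk, AddHom.coe_mk, Pi.zero_apply] at h0
  have hR : 0 ≤ r j * x j := mul_nonneg (hr j) ((abs_nonneg _).trans (hmax j))
  have hC : CSum p cR x j ≤ 0 := sum_nonpos fun k _ =>
    mul_nonpos_of_nonneg_of_nonpos (hc j k) (by linarith [le_abs_self (x k), hmax k])
  have hA : 0 ≤ ∑ k, aR j k * (x k + x j) := sum_nonneg fun k _ =>
    mul_nonneg (ha j k) (by linarith [neg_abs_le (x k), hmax k])
  have hT := TSum_nonpos_of_isMax hp x fun k => (le_abs_self _).trans (hmax k)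
  linarith

lemma eq_const_of_boundaryOp_eq_zero (hr : ∀ j, 0 ≤ r j) (hc : ∀ j k, 0 ≤ cR j k)
    (ha : ∀ j k, 0 ≤ aR j k) {x : Fin (p+1) → ℝ} (hx : boundaryOp hp r cR aR x = 0)
    (j₀ : Fin (p+1)) (hmax : ∀ k, |x k| ≤ x j₀) (k : Fin (p+1)) : x k = x j₀ := by
  -- the maximum propagates along the chain, since at a maximal site `𝒯x` vanishes
  have hmax' : ∀ j, x j = x j₀ → ∀ k, |x k| ≤ x j := fun j hj => hj ▸ hmax
  have hprop : ∀ j k, x j = x j₀ → (k.1 + 1 = j.1 ∨ j.1 + 1 = k.1) → x k = x j₀ :=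
    fun j k hj hk => hj ▸ eq_of_TSum_eq_zero_of_isMax hp x
      (fun l => (le_abs_self _).trans (hmax' j hj l))
      (TSum_eq_zero_of_boundaryOp_eq_zero hp hr hc ha hx j (hmax' j hj)) k hk
  have hiff := Fin.iff_zero_of_forall_castSucc_iff_succ (fun j => x j = x j₀)
    fun i => ⟨fun h => hprop _ _ h (by simp), fun h => hprop _ _ h (by simp)⟩
  exact (hiff k).mpr ((hiff j₀).mp rfl)

lemma boundaryOp_injective (hr : ∀ j, 0 ≤ r j) (hc : ∀ j k, 0 ≤ cR j k) (ha : ∀ j k, 0 ≤ aR j k)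
    (hpos : 0 < (∑ j, r j) + ∑ j, ∑ k, aR j k) :
    Function.Injective (boundaryOp hp r cR aR) := by
  rw [← LinearMap.ker_eq_bot, LinearMap.ker_eq_bot']
  intro x hx
  obtain ⟨j₀, hj₀⟩ := Finite.exists_max fun j => |x j|
  have hzero : ∀ y, boundaryOp hp r cR aR y = 0 → (∀ k, |y k| ≤ y j₀) → y j₀ = 0 := by
    intro y hy hmax
    have hy' : boundaryOp hp r cR aR (fun _ => y j₀) = 0 := by
      rwa [← funext (eq_const_of_boundaryOp_eq_zero hp hr hc ha hy j₀ hmax)]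
    have hsum : (∑ j, (r j + 2 * ∑ k, aR j k)) * y j₀ = 0 := by
      rw [sum_mul]
      exact sum_eq_zero fun j _ => by
        simpa [boundaryOp_const_apply] using congrFun hy' j
    have hcoef : 0 < ∑ j, (r j + 2 * ∑ k, aR j k) := by
      rw [sum_add_distrib, ← mul_sum]
      linarith [sum_nonneg fun j (_ : j ∈ univ) => sum_nonneg fun k (_ : k ∈ univ) => ha j k]
    exact (mul_eq_zero.mp hsum).resolve_left hcoef.ne'
  have habs : |x j₀| = 0 := by
    rcases abs_choice (x j₀) with h | h
    · rw [h]
      exact hzero x hx fun k => h ▸ hj₀ k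
    · rw [h, neg_eq_zero]
      simpa using hzero (-x) (by rw [map_neg, hx, neg_zero]) fun k => by simpa [h] using hj₀ k
  funext k
  exact abs_nonpos_iff.mp (habs ▸ hj₀ k)

end Injectivity

-- Sites are addressed by their natural-number index, so that neighbour arithmetic needs no
-- bound proofs; indices outside the chain read as empty.
def occAt {m : ℕ} (η : Fin m → Bool) (k : ℕ) : ℝ :=
  if h : k < m then occ (η ⟨k, h⟩) else 0

lemma occAt_val {m : ℕ} (η : Fin m → Bool) (i : Fin m) : occAt η i = occ (η i) :=
  dif_pos i.isLt

lemma occAt_mem_Icc {m : ℕ} (η : Fin m → Bool) (k : ℕ) : occAt η k ∈ Set.Icc (0 : ℝ) 1 := by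
  unfold occAt occ
  split_ifs <;> norm_num

lemma occ_swapCfg_sub {m : ℕ} (η : Fin m → Bool) (i : Fin m) (k : ℕ) (hk : k + 1 < m) :
    occ (swapCfg η ⟨k, by omega⟩ ⟨k + 1, hk⟩ i) - occ (η i) =
      (if i.1 = k then occAt η (k + 1) - occAt η k else 0) +
        (if i.1 = k + 1 then occAt η k - occAt η (k + 1) else 0) := by
  obtain ⟨i, hi⟩ := i
  simp only [swapCfg, Equiv.swap_apply_def, Fin.mk.injEq, occAt, dif_pos hk,
    dif_pos (by omega : k < m)]
  split_ifs <;> first | omega | (subst_vars; ring)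

lemma sum_range_ite_add_ite (n i : ℕ) (A B : ℕ → ℝ) :
    ∑ k ∈ range n, ((if i = k then A k else 0) + (if i = k + 1 then B k else 0)) =
      (if i < n then A i else 0) + (if 1 ≤ i ∧ i ≤ n then B (i - 1) else 0) := by
  simp only [sum_add_distrib, sum_ite_eq, mem_range]
  congr 1
  rcases Nat.eq_zero_or_pos i with rfl | hi
  · simp
  · have hshift : ∀ k, i = k + 1 ↔ i - 1 = k := by omega
    simp only [hshift, sum_ite_eq, mem_range]
    split_ifs <;> first | rfl | omega

lemma stirring_occ (N p : ℕ) (hN : 2 ≤ N) (i : Fin (N+p)) (η : Fin (N+p) → Bool) :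
    LS N p (by omega) (fun ζ => occ (ζ i)) η + L01 N p hN (fun ζ => occ (ζ i)) η
        + Lbulk N p (fun ζ => occ (ζ i)) η =
      (if i.1 + 1 < N + p then occAt η (i + 1) - occAt η i else 0) +
        (if 1 ≤ i.1 then occAt η (i - 1) - occAt η i else 0) := by
  set g : ℕ → ℝ := fun k => (if i.1 = k then occAt η (k + 1) - occAt η k else 0) +
    (if i.1 = k + 1 then occAt η k - occAt η (k + 1) else 0) with hg
  have hLS : LS N p (by omega) (fun ζ => occ (ζ i)) η = ∑ k ∈ range p, g k := by
    rw [LS, ← Fin.sum_univ_eq_sum_range]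
    exact sum_congr rfl fun k _ => occ_swapCfg_sub η i k _
  have hL01 : L01 N p hN (fun ζ => occ (ζ i)) η = g p := occ_swapCfg_sub η i p _
  have hLbulk : Lbulk N p (fun ζ => occ (ζ i)) η = ∑ k ∈ range (N - 2), g (p + 1 + k) := by
    rw [Lbulk, ← Fin.sum_univ_eq_sum_range (fun k => g (p + 1 + k))]
    refine sum_congr rfl fun k _ => ?_
    rw [show p + 1 + k.1 = k.1 + p + 1 by ring]
    exact occ_swapCfg_sub η i _ _
  rw [hLS, hL01, hLbulk, ← sum_range_succ, ← sum_range_add,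
    show p + 1 + (N - 2) = N + p - 1 by omega, hg, sum_range_ite_add_ite]
  have hi := i.isLt
  split_ifs <;> first | rfl | omega | rw [Nat.sub_add_cancel (by omega : 1 ≤ i.1)]

lemma occ_flipCfg_self {m : ℕ} (η : Fin m → Bool) (a : Fin m) :
    occ (flipCfg η a a) = 1 - occ (η a) := by
  cases h : η a <;> simp [flipCfg, occ, h]

lemma flipCfg_apply_of_ne {m : ℕ} (η : Fin m → Bool) {a i : Fin m} (h : i ≠ a) :
    flipCfg η a i = η i :=
  Function.update_of_ne h _ _

lemma reservoir_rate_mul_jump (A : ℝ) (b : Bool) :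
    (A * (1 - occ b) + occ b * (1 - A)) * (1 - occ b - occ b) = A - occ b := by
  cases b <;> simp [occ]

lemma copy_rate_mul_jump (b b' : Bool) :
    (occ b' * (1 - occ b) + occ b * (1 - occ b')) * (1 - occ b - occ b) = occ b' - occ b := by
  cases b <;> cases b' <;> simp [occ]

lemma anticopy_rate_mul_jump (b b' : Bool) :
    (occ b * occ b' + (1 - occ b) * (1 - occ b')) * (1 - occ b - occ b) = 1 - occ b - occ b' := by
  cases b <;> cases b' <;> norm_num [occ]

section LeftFlips

variable (N p : ℕ) (hN : 1 ≤ N) (η : Fin (N+p) → Bool)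

lemma emb_injective : Function.Injective (emb N p hN) :=
  fun _ _ h => Fin.ext (congrArg Fin.val h :)

lemma occAt_emb (k : Fin (p+1)) : occAt η k = occ (η (emb N p hN k)) :=
  occAt_val η (emb N p hN k)

lemma sum_mul_flip_occ_emb (F : Fin (p+1) → ℝ) (j : Fin (p+1)) :
    ∑ k, F k * (occ (flipCfg η (emb N p hN k) (emb N p hN j)) - occ (η (emb N p hN j))) =
      F j * (1 - occ (η (emb N p hN j)) - occ (η (emb N p hN j))) := by
  rw [sum_eq_single j, occ_flipCfg_self]
  · intro k _ hkj
    rw [flipCfg_apply_of_ne η ((emb_injective N p hN).ne (Ne.symm hkj)), sub_self, mul_zero]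
  · simp

lemma sum_mul_flip_occ_of_lt (F : Fin (p+1) → ℝ) (i : Fin (N+p)) (hi : p < i.1) :
    ∑ k, F k * (occ (flipCfg η (emb N p hN k) i) - occ (η i)) = 0 :=
  sum_eq_zero fun k _ => by
    rw [flipCfg_apply_of_ne η (fun h => by simp [h, emb] at hi; omega), sub_self, mul_zero]

variable (r α : Fin (p+1) → ℝ) (cR aR : Fin (p+1) → Fin (p+1) → ℝ)

lemma LR_occ_emb (j : Fin (p+1)) :
    LR N p hN r α (fun ζ => occ (ζ (emb N p hN j))) η =
      r j * (α j - occ (η (emb N p hN j))) := by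
  rw [LR, sum_mul_flip_occ_emb, mul_assoc, reservoir_rate_mul_jump]

lemma LC_occ_emb (j : Fin (p+1)) :
    LC N p hN cR (fun ζ => occ (ζ (emb N p hN j))) η =
      CSum p cR (fun k => occ (η (emb N p hN k))) j := by
  simp only [LC, ← sum_mul]
  rw [sum_mul_flip_occ_emb, sum_mul]
  exact sum_congr rfl fun k _ => by rw [mul_assoc, copy_rate_mul_jump]

lemma LA_occ_emb (j : Fin (p+1)) :
    LA N p hN aR (fun ζ => occ (ζ (emb N p hN j))) η =
      ASum p aR (fun k => occ (η (emb N p hN k))) j := by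
  simp only [LA, ← sum_mul]
  rw [sum_mul_flip_occ_emb, sum_mul]
  exact sum_congr rfl fun k _ => by rw [mul_assoc, anticopy_rate_mul_jump, sub_right_comm]

lemma LR_add_LC_add_LA_occ_of_lt (i : Fin (N+p)) (hi : p < i.1) :
    LR N p hN r α (fun ζ => occ (ζ i)) η + LC N p hN cR (fun ζ => occ (ζ i)) η
      + LA N p hN aR (fun ζ => occ (ζ i)) η = 0 := by
  simp only [LR, LC, LA, ← sum_mul, sum_mul_flip_occ_of_lt N p hN η _ i hi, add_zero]

end LeftFlips

lemma Lright_occ_of_ne (N p : ℕ) (hN : 1 ≤ N) (β : ℝ) (η : Fin (N+p) → Bool) (i : Fin (N+p))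
    (hi : i.1 ≠ N + p - 1) : Lright N p hN β (fun ζ => occ (ζ i)) η = 0 := by
  rw [Lright, flipCfg_apply_of_ne η (fun h => hi (by rw [h])), sub_self, mul_zero]

section GeneratorOnOccupation

variable (N p : ℕ) (hN : 2 ≤ N) (hp : 1 ≤ p) (r α : Fin (p+1) → ℝ)
  (cR aR : Fin (p+1) → Fin (p+1) → ℝ) (β : ℝ) (η : Fin (N+p) → Bool)

lemma LN_occ_bulk (q : ℕ) (hq : p + 1 ≤ q) (hqN : q + 2 ≤ N + p) :
    LN N p hN r α cR aR β (fun ζ => occ (ζ ⟨q, by omega⟩)) η =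
      occAt η (q + 1) + occAt η (q - 1) - 2 * occAt η q := by
  have hS := stirring_occ N p hN ⟨q, by omega⟩ η
  have hF := LR_add_LC_add_LA_occ_of_lt N p (by omega) η r α cR aR ⟨q, by omega⟩ hq
  have hR := Lright_occ_of_ne N p (by omega) β η ⟨q, by omega⟩ (by dsimp only; omega)
  rw [if_pos (by dsimp only; omega), if_pos (by dsimp only; omega)] at hS
  rw [LN]
  linarith

lemma nearestNeighbour_eq_TSum_add_ite (y : ℕ → ℝ) (j : Fin (p+1)) :
    y (j + 1) - y j + (if 1 ≤ j.1 then y (j - 1) - y j else 0) =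
      TSum p hp (fun k => y k) j + if j = Fin.last p then y (p + 1) - y p else 0 := by
  obtain ⟨j, hj⟩ := j
  simp only [TSum, Fin.ext_iff, Fin.val_last]
  split_ifs <;> first | omega | (subst_vars; ring)

lemma LN_occ_emb (j : Fin (p+1)) :
    LN N p hN r α cR aR β (fun ζ => occ (ζ (emb N p (by omega) j))) η =
      boundaryResidual hp r α cR aR (fun k => occAt η k) j +
        if j = Fin.last p then occAt η (p + 1) - occAt η p else 0 := by
  have hS := stirring_occ N p hN (emb N p (by omega) j) η
  rw [show (emb N p (by omega) j).1 = j.1 from rfl, if_pos (by omega)] at hS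
  have hT := nearestNeighbour_eq_TSum_add_ite p hp (occAt η) j
  rw [LN, LR_occ_emb, LC_occ_emb, LA_occ_emb,
    Lright_occ_of_ne N p _ β η _ (by simp only [emb]; omega), boundaryResidual]
  simp only [← occAt_emb N p (by omega) η] at hS ⊢
  linarith

end GeneratorOnOccupation

section Expectation

variable {S : Type*} [Fintype S] (μ : S → ℝ)

lemma expVal_add (f g : S → ℝ) : expVal μ (fun s => f s + g s) = expVal μ f + expVal μ g := by
  simp only [expVal, mul_add, sum_add_distrib]

lemma expVal_sub (f g : S → ℝ) : expVal μ (fun s => f s - g s) = expVal μ f - expVal μ g := by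
  simp only [expVal, mul_sub, sum_sub_distrib]

lemma expVal_const_mul (c : ℝ) (f : S → ℝ) : expVal μ (fun s => c * f s) = c * expVal μ f := by
  simp only [expVal, mul_sum, mul_left_comm]

lemma expVal_const (hμ : ∑ s, μ s = 1) (c : ℝ) : expVal μ (fun _ => c) = c := by
  rw [expVal, ← sum_mul, hμ, one_mul]

lemma expVal_sum {ι : Type*} (t : Finset ι) (f : ι → S → ℝ) :
    expVal μ (fun s => ∑ i ∈ t, f i s) = ∑ i ∈ t, expVal μ (f i) := by
  simp only [expVal, mul_sum]
  exact sum_comm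

lemma expVal_ite (P : Prop) [Decidable P] (f : S → ℝ) :
    expVal μ (fun s => if P then f s else 0) = if P then expVal μ f else 0 := by
  split_ifs <;> simp [expVal]

lemma expVal_boundaryResidual (hμ : ∑ s, μ s = 1) {p : ℕ} (hp : 1 ≤ p) (r α : Fin (p+1) → ℝ)
    (cR aR : Fin (p+1) → Fin (p+1) → ℝ) (g : Fin (p+1) → S → ℝ) (j : Fin (p+1)) :
    expVal μ (fun s => boundaryResidual hp r α cR aR (fun k => g k s) j) =
      boundaryResidual hp r α cR aR (fun k => expVal μ (g k)) j := by
  simp only [boundaryResidual, CSum, ASum, TSum]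
  split_ifs <;>
    simp only [expVal_add, expVal_sub, expVal_const_mul, expVal_sum, expVal_const μ hμ]

end Expectation

lemma sub_eq_mul_of_discrete_harmonic (y : ℕ → ℝ) (a n : ℕ)
    (h : ∀ q, a < q → q < a + n → y (q + 1) + y (q - 1) = 2 * y q) (m : ℕ) (hm : m ≤ n) :
    y (a + m) - y a = m * (y (a + 1) - y a) := by
  have hstep : ∀ m < n, y (a + m + 1) - y (a + m) = y (a + 1) - y a := by
    intro m hm
    induction m with
    | zero => rfl
    | succ m ih =>
      have hq := h (a + m + 1) (by omega) (by omega)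
      rw [Nat.add_sub_cancel] at hq
      rw [← add_assoc]
      linarith [ih (by omega)]
  induction m with
  | zero => simp
  | succ m ih =>
    rw [← add_assoc]
    push_cast
    linarith [ih (by omega), hstep m (by omega)]

lemma mul_abs_slope_le_one_of_discrete_harmonic (y : ℕ → ℝ) (a n : ℕ)
    (hy : ∀ k, y k ∈ Set.Icc (0 : ℝ) 1)
    (h : ∀ q, a < q → q < a + n → y (q + 1) + y (q - 1) = 2 * y q) :
    n * |y (a + 1) - y a| ≤ 1 := by
  rw [← abs_of_nonneg (Nat.cast_nonneg (α := ℝ) n), ← abs_mul,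
    ← sub_eq_mul_of_discrete_harmonic y a n h n le_rfl, abs_le]
  constructor <;> linarith [(hy a).1, (hy a).2, (hy (a + n)).1, (hy (a + n)).2]

section Stationary

def meanOcc {m : ℕ} (μ : (Fin m → Bool) → ℝ) (k : ℕ) : ℝ := expVal μ (fun η => occAt η k)

lemma meanOcc_nonneg {m : ℕ} {μ : (Fin m → Bool) → ℝ} (hμ : ∀ η, 0 ≤ μ η) (k : ℕ) :
    0 ≤ meanOcc μ k :=
  sum_nonneg fun η _ => mul_nonneg (hμ η) (occAt_mem_Icc η k).1

lemma meanOcc_le_one {m : ℕ} {μ : (Fin m → Bool) → ℝ} (hμ : ∀ η, 0 ≤ μ η)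
    (hμ1 : ∑ η, μ η = 1) (k : ℕ) : meanOcc μ k ≤ 1 := by
  rw [← expVal_const μ hμ1 1]
  exact sum_le_sum fun η _ =>
    mul_le_mul_of_nonneg_left (occAt_mem_Icc η k).2 (hμ η)

variable {N p : ℕ} {hN : 2 ≤ N} {r α : Fin (p+1) → ℝ} {cR aR : Fin (p+1) → Fin (p+1) → ℝ}
  {β : ℝ} {μ : (Fin (N+p) → Bool) → ℝ}

lemma IsStationaryGen.meanOcc_bulk_harmonic (hμ : IsStationaryGen (LN N p hN r α cR aR β) μ)
    (q : ℕ) (hq : p < q) (hqN : q < p + (N - 1)) :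
    meanOcc μ (q + 1) + meanOcc μ (q - 1) = 2 * meanOcc μ q := by
  have h := hμ.2.2 fun ζ => occ (ζ ⟨q, by omega⟩)
  simp only [LN_occ_bulk N p hN r α cR aR β _ q hq (by omega)] at h
  change expVal μ _ = 0 at h
  simp only [expVal_add, expVal_sub, expVal_const_mul] at h
  unfold meanOcc
  linarith

lemma IsStationaryGen.boundaryResidual_meanOcc (hp : 1 ≤ p)
    (hμ : IsStationaryGen (LN N p hN r α cR aR β) μ) (j : Fin (p+1)) :
    boundaryResidual hp r α cR aR (fun k => meanOcc μ k) j +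
      (if j = Fin.last p then meanOcc μ (p + 1) - meanOcc μ p else 0) = 0 := by
  have h := hμ.2.2 fun ζ => occ (ζ (emb N p (by omega) j))
  simp only [LN_occ_emb N p hN hp r α cR aR β] at h
  change expVal μ _ = 0 at h
  rwa [expVal_add, expVal_boundaryResidual μ hμ.2.1, expVal_ite, expVal_sub] at h

lemma IsStationaryGen.abs_meanOcc_slope_le
    (hμ : IsStationaryGen (LN N p hN r α cR aR β) μ) :
    |meanOcc μ (p + 1) - meanOcc μ p| ≤ 2 / N := by
  have h := mul_abs_slope_le_one_of_discrete_harmonic (meanOcc μ) p (N - 1)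
    (fun k => ⟨meanOcc_nonneg hμ.1 k, meanOcc_le_one hμ.1 hμ.2.1 k⟩) hμ.meanOcc_bulk_harmonic
  have hN2 : (2 : ℝ) ≤ N := by exact_mod_cast hN
  have hN' : (N : ℝ) ≤ 2 * ((N - 1 : ℕ) : ℝ) := by
    rw [Nat.cast_sub (by omega), Nat.cast_one]
    linarith
  rw [le_div_iff₀ (by positivity)]
  nlinarith [abs_nonneg (meanOcc μ (p + 1) - meanOcc μ p)]

end Stationary

/-- if `Σ_j r_j + Σ_{j,k} a_{j,k} > 0` and `ρ` solves the system (*),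
then `|ρ_N(k) − ρ(k)| ≤ C₀/N` for all sites `-p ≤ k ≤ 0`, uniformly in `N`. -/
theorem stmt7 (p : ℕ) (hp : 1 ≤ p) (β : ℝ)
    (r α : Fin (p+1) → ℝ) (cR aR : Fin (p+1) → Fin (p+1) → ℝ)
    (hr : ∀ j, 0 ≤ r j)
    (hc : ∀ j k, 0 ≤ cR j k) (ha : ∀ j k, 0 ≤ aR j k)
    (hpos : 0 < (∑ j, r j) + ∑ j, ∑ k, aR j k)
    (ρ : Fin (p+1) → ℝ)
    (hρ : ∀ j : Fin (p+1),
      0 = r j * (α j - ρ j) + CSum p cR ρ j + ASum p aR ρ j + TSum p hp ρ j) :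
    ∃ C₀ : ℝ, ∀ (N : ℕ) (hN : 2 ≤ N) (μ : (Fin (N+p) → Bool) → ℝ),
      IsStationaryGen (LN N p hN r α cR aR β) μ →
      ∀ j : Fin (p+1),
        |expVal μ (fun η => occ (η (emb N p (by omega) j))) - ρ j| ≤ C₀ / N := by
  have hinj := boundaryOp_injective hp hr hc ha hpos
  obtain ⟨w, hw⟩ := LinearMap.injective_iff_surjective.mp hinj (Pi.single (Fin.last p) 1)
  refine ⟨2 * ∑ k, |w k|, fun N hN μ hμ j => ?_⟩
  set s := meanOcc μ (p + 1) - meanOcc μ p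
  have hdiff : (fun k : Fin (p+1) => meanOcc μ k) - ρ = (-s) • w := hinj <| by
    funext k
    have hk := hμ.boundaryResidual_meanOcc hp k
    have hρk : boundaryResidual hp r α cR aR ρ k = 0 := (hρ k).symm
    rw [map_smul, hw, boundaryOp_sub_apply hp r α]
    simp only [Pi.smul_apply, Pi.single_apply, smul_eq_mul]
    split_ifs at hk ⊢ <;> linarith
  calc |expVal μ (fun η => occ (η (emb N p (by omega) j))) - ρ j|
      = |s| * |w j| := by
        rw [← abs_neg s, ← abs_mul, ← smul_eq_mul, ← Pi.smul_apply, ← hdiff]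
        simp only [meanOcc, occAt_emb N p (by omega), Pi.sub_apply]
    _ ≤ 2 / N * ∑ k, |w k| :=
        mul_le_mul hμ.abs_meanOcc_slope_le
          (single_le_sum (fun k _ => abs_nonneg (w k)) (mem_univ j)) (abs_nonneg _)
          (by positivity)
    _ = 2 * (∑ k, |w k|) / N := by ring
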